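/- arXiv:2310.18554 — 3 statements merged into one kernel-verified Lean document; each statement's English description precedes it below -/
import Mathlib

section
/- For the logistic loss, the following identity holds for any θ ∈ ℝ^d: ℓ_s(θ⋆) = ℓ_s(θ) + ξ_s ⟨x_s, θ − θ⋆⟩ − KL( μ(⟨x_s, θ⋆⟩), μ(⟨x_s, θ⟩) ), where ξ_s = r_s − μ(⟨x_s, θ⋆⟩) and KL(p, q) = p log(p/q) + (1−p) log((1−p)/(1−q)) is the KL divergence between Bernoulli(p) and Bernoulli(q). -/
open scoped RealInnerProductSpace

/-- The logistic (sigmoid) function `μ(z) = 1/(1+e^{-z})`. -/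
noncomputable def logistic (z : ℝ) : ℝ := 1 / (1 + Real.exp (-z))

/-- The logistic loss `ℓ(θ) = -r log μ(⟨x,θ⟩) - (1-r) log(1-μ(⟨x,θ⟩))`. -/
noncomputable def logLoss {d : ℕ} (x : EuclideanSpace ℝ (Fin d)) (r : ℝ)
    (θ : EuclideanSpace ℝ (Fin d)) : ℝ :=
  -(r * Real.log (logistic ⟪x, θ⟫)) - (1 - r) * Real.log (1 - logistic ⟪x, θ⟫)

/-- KL divergence between `Bernoulli(p)` and `Bernoulli(q)`. -/
noncomputable def klBer (p q : ℝ) : ℝ :=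
  p * Real.log (p / q) + (1 - p) * Real.log ((1 - p) / (1 - q))

/-!
Since `1 - μ(z) = μ(z) e^{-z}`, we have `log (1 - μ z) = log μ z - z`. Hence, writing `L = log ∘ μ`,
the loss is `ℓ(θ) = (1 - r) ⟨x, θ⟩ - L ⟨x, θ⟩` and `KL(μ a, μ b) = L a - L b - (1 - μ a) (a - b)`;
with these closed forms the identity is a linear rearrangement.
-/

lemma logistic_pos (z : ℝ) : 0 < logistic z := by
  unfold logistic; positivity

lemma one_sub_logistic (z : ℝ) : 1 - logistic z = logistic z * Real.exp (-z) := by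
  have : 1 + Real.exp (-z) ≠ 0 := by positivity
  unfold logistic
  field_simp
  ring

lemma log_one_sub_logistic (z : ℝ) :
    Real.log (1 - logistic z) = Real.log (logistic z) - z := by
  rw [one_sub_logistic, Real.log_mul (logistic_pos z).ne' (Real.exp_pos _).ne', Real.log_exp,
    sub_eq_add_neg]

lemma one_sub_logistic_pos (z : ℝ) : 0 < 1 - logistic z := by
  rw [one_sub_logistic]; exact mul_pos (logistic_pos z) (Real.exp_pos _)

lemma logLoss_eq {d : ℕ} (x : EuclideanSpace ℝ (Fin d)) (r : ℝ) (θ : EuclideanSpace ℝ (Fin d)) :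
    logLoss x r θ = (1 - r) * ⟪x, θ⟫ - Real.log (logistic ⟪x, θ⟫) := by
  rw [logLoss, log_one_sub_logistic]
  ring

lemma klBer_logistic (a b : ℝ) :
    klBer (logistic a) (logistic b) =
      Real.log (logistic a) - Real.log (logistic b) - (1 - logistic a) * (a - b) := by
  rw [klBer, Real.log_div (logistic_pos a).ne' (logistic_pos b).ne',
    Real.log_div (one_sub_logistic_pos a).ne' (one_sub_logistic_pos b).ne',
    log_one_sub_logistic, log_one_sub_logistic]
  ring

theorem stmt_2_general {d : ℕ} (x θstar θ : EuclideanSpace ℝ (Fin d)) (r : ℝ) :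
    logLoss x r θstar =
      logLoss x r θ + (r - logistic ⟪x, θstar⟫) * ⟪x, θ - θstar⟫
        - klBer (logistic ⟪x, θstar⟫) (logistic ⟪x, θ⟫) := by
  rw [logLoss_eq, logLoss_eq, klBer_logistic, inner_sub_right]
  ring

/-- decomposition of the logistic loss at the true parameter. -/
theorem stmt_2 {d : ℕ} (x θstar θ : EuclideanSpace ℝ (Fin d)) (r : ℝ)
    (hr : r = 0 ∨ r = 1) :
    logLoss x r θstar =
      logLoss x r θ + (r - logistic ⟪x, θstar⟫) * ⟪x, θ - θstar⟫
        - klBer (logistic ⟪x, θstar⟫) (logistic ⟪x, θ⟫) :=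
  stmt_2_general x θstar θ r
end

section
/- Let x_1, …, x_T ∈ ℝ^d with ‖x_t‖₂ ≤ 1 for all t, let λ > 0, and let V_t = λ I_d + Σ_{s=1}^{t−1} x_s x_sᵀ. Define H_T = { t ∈ [T] : ‖x_t‖²_{V_t^{−1}} > 1 }, where ‖v‖²_M = vᵀ M v. Then |H_T| ≤ (2d / log 2) · log( 1 + 1/(λ log 2) ). -/
/-- The quadratic form `vᵀ M v` associated with a square matrix `M`. -/
noncomputable def quadForm {n : Type*} [Fintype n] (M : Matrix n n ℝ) (v : n → ℝ) : ℝ :=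
  ∑ i, ∑ j, v i * M i j * v j

/-!
Only the rounds in `H_T` are kept: with `W_t = λ I + Σ_{s ∈ H_T, s < t} x_s x_sᵀ ≤ V_t` we still
have `‖x_t‖²_{W_t⁻¹} > 1` for `t ∈ H_T`, so by the matrix determinant lemma every such round at
least doubles `det W`, giving `2^|H_T| λ^d ≤ det W_{T+1}`. By AM-GM on the eigenvalues,
`det W_{T+1} ≤ (tr W_{T+1} / d)^d ≤ (λ + |H_T|/d)^d`. Comparing the two bounds leaves the scalar
inequality `z ≤ log (1 + c z)` for `z = |H_T| log 2 / d` and `c = 1 / (λ log 2)`, which forces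
`z ≤ 2 log (1 + c)` by concavity.
-/

open Real Matrix Finset
open scoped MatrixOrder

theorem Real.prod_le_sum_div_card_pow {ι : Type*} [Fintype ι] {f : ι → ℝ} (hf : ∀ i, 0 ≤ f i) :
    ∏ i, f i ≤ ((∑ i, f i) / Fintype.card ι) ^ Fintype.card ι := by
  rcases isEmpty_or_nonempty ι with _ | _
  · simp
  have hcard : (0 : ℝ) < Fintype.card ι := by exact_mod_cast Fintype.card_pos
  have amgm := geom_mean_le_arith_mean univ (fun _ => 1) f (fun _ _ => zero_le_one)
    (by simpa using hcard) (fun i _ => hf i)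
  simp only [rpow_one, sum_const, card_univ, nsmul_eq_mul, mul_one, one_mul] at amgm
  calc ∏ i, f i = ((∏ i, f i) ^ (Fintype.card ι : ℝ)⁻¹) ^ Fintype.card ι :=
        (rpow_inv_natCast_pow (prod_nonneg fun i _ => hf i) Fintype.card_ne_zero).symm
    _ ≤ ((∑ i, f i) / Fintype.card ι) ^ Fintype.card ι := by
        gcongr
        exact rpow_nonneg (prod_nonneg fun i _ => hf i) _

theorem Real.log_one_add_lt_one_add_half {c : ℝ} (hc : 0 ≤ c) : log (1 + c) < 1 + c / 2 := by
  rw [log_lt_iff_lt_exp (by linarith)]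
  nlinarith [quadratic_le_exp_of_nonneg (by linarith : (0 : ℝ) ≤ 1 + c / 2)]

theorem Real.le_two_mul_log_one_add_of_le_log {c z : ℝ} (hc : 0 < c)
    (hz : z ≤ log (1 + c * z)) : z ≤ 2 * log (1 + c) := by
  set z₀ := 2 * log (1 + c)
  have hz₀ : 0 < z₀ := by have := log_pos (by linarith : 1 < 1 + c); linarith
  by_contra! hlt
  have hcz₀ : 0 < c * z₀ := mul_pos hc hz₀
  have hbelow : log (1 + c * z₀) < z₀ := calc
    log (1 + c * z₀) < log ((1 + c) ^ 2) :=
      log_lt_log (by linarith) (by nlinarith [log_one_add_lt_one_add_half hc.le])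
    _ = z₀ := by rw [log_pow]; push_cast; rfl
  -- Bernoulli's inequality is the concavity of `z ↦ log (1 + c z)` along the ray through `z₀`.
  have hbernoulli : 1 + c * z ≤ (1 + c * z₀) ^ (z / z₀) := by
    have := one_add_mul_self_le_rpow_one_add (by linarith : -1 ≤ c * z₀)
      ((one_le_div hz₀).mpr hlt.le)
    rwa [show z / z₀ * (c * z₀) = c * z by field_simp] at this
  have : log (1 + c * z) < z := calc
    log (1 + c * z) ≤ z / z₀ * log (1 + c * z₀) := by
      rw [← log_rpow (by linarith)]
      exact log_le_log (by nlinarith) hbernoulli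
    _ < z / z₀ * z₀ := by gcongr; exact div_pos (hz₀.trans hlt) hz₀
    _ = z := div_mul_cancel₀ z hz₀.ne'
  linarith

theorem Real.natCast_le_of_two_pow_mul_pow_le {d m : ℕ} {lam : ℝ} (hlam : 0 < lam)
    (h : 2 ^ m * lam ^ d ≤ ((d * lam + m) / d) ^ d) :
    (m : ℝ) ≤ 2 * d / log 2 * log (1 + 1 / (lam * log 2)) := by
  rcases d.eq_zero_or_pos with rfl | hd
  · rcases m.eq_zero_or_pos with rfl | hm
    · simp
    · simp only [pow_zero, mul_one] at h
      linarith [one_lt_pow₀ (one_lt_two : (1 : ℝ) < 2) hm.ne']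
  have hlog2 : 0 < log 2 := log_pos one_lt_two
  have hd' : (0 : ℝ) < d := Nat.cast_pos.mpr hd
  have hfactor : (d * lam + m) / d = lam * (1 + 1 / (lam * log 2) * (m * log 2 / d)) := by
    field_simp
  have hm : (m : ℝ) = d / log 2 * (m * log 2 / d) := by field_simp
  set c := 1 / (lam * log 2)
  set z := m * log 2 / d
  rw [hfactor, mul_pow, mul_comm] at h
  have hpow : (2 : ℝ) ^ m ≤ (1 + c * z) ^ d := le_of_mul_le_mul_left h (pow_pos hlam d)
  have hz : z ≤ log (1 + c * z) := by
    have := log_le_log (by positivity) hpow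
    rw [log_pow, log_pow] at this
    rw [div_le_iff₀ hd']
    linarith
  calc (m : ℝ) = d / log 2 * z := hm
    _ ≤ d / log 2 * (2 * log (1 + c)) := by
        gcongr
        exact le_two_mul_log_one_add_of_le_log (by positivity) hz
    _ = 2 * d / log 2 * log (1 + c) := by ring

theorem quadForm_eq_dotProduct_mulVec {n : Type*} [Fintype n] (M : Matrix n n ℝ) (v : n → ℝ) :
    quadForm M v = v ⬝ᵥ M *ᵥ v := by
  simp only [quadForm, dotProduct, mulVec, Finset.mul_sum, mul_assoc]

namespace Matrix

variable {n ι : Type*} [Fintype n]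

theorem PosDef.add_sum_vecMulVec_self {A : Matrix n n ℝ} (hA : A.PosDef) (u : ι → n → ℝ)
    (F : Finset ι) : (A + ∑ s ∈ F, vecMulVec (u s) (u s)).PosDef :=
  hA.add_posSemidef (posSemidef_sum F fun s _ => posSemidef_vecMulVec_self_star (u s))

theorem sum_vecMulVec_self_le_of_subset {F G : Finset ι} (h : F ⊆ G) (u : ι → n → ℝ) :
    ∑ s ∈ F, vecMulVec (u s) (u s) ≤ ∑ s ∈ G, vecMulVec (u s) (u s) :=
  sum_le_sum_of_subset_of_nonneg h fun s _ _ =>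
    nonneg_iff_posSemidef.mpr (posSemidef_vecMulVec_self_star (u s))

theorem trace_sum_vecMulVec_self_le_card {u : ι → n → ℝ} (hu : ∀ s, u s ⬝ᵥ u s ≤ 1)
    (F : Finset ι) : (∑ s ∈ F, vecMulVec (u s) (u s)).trace ≤ #F := by
  simpa [trace_sum] using
    sum_le_card_nsmul F _ 1 fun s _ => (trace_vecMulVec (u s) (u s)).trans_le (hu s)

variable [DecidableEq n]

theorem mulVec_nonsing_inv_mulVec {R : Type*} [CommRing R] {A : Matrix n n R}
    (hA : IsUnit A.det) (z : n → R) : A *ᵥ A⁻¹ *ᵥ z = z := by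
  rw [mulVec_mulVec, mul_nonsing_inv _ hA, one_mulVec]

theorem det_add_vecMulVec {R : Type*} [CommRing R] {A : Matrix n n R} (hA : IsUnit A.det)
    (u v : n → R) : (A + vecMulVec u v).det = A.det * (1 + v ⬝ᵥ A⁻¹ *ᵥ u) := by
  rw [vecMulVec_eq Unit, det_add_replicateCol_mul_replicateRow hA, det_unique (n := Unit),
    dotProduct_mulVec]
  simp [Matrix.mul_apply, vecMul, dotProduct]

theorem PosSemidef.det_le_trace_div_card_pow {A : Matrix n n ℝ} (hA : A.PosSemidef) :
    A.det ≤ (A.trace / Fintype.card n) ^ Fintype.card n := by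
  simpa [hA.isHermitian.det_eq_prod_eigenvalues, hA.isHermitian.trace_eq_sum_eigenvalues] using
    Real.prod_le_sum_div_card_pow hA.eigenvalues_nonneg

theorem PosDef.two_mul_dotProduct_sub_le {A : Matrix n n ℝ} (hA : A.PosDef) (v z : n → ℝ) :
    2 * (v ⬝ᵥ z) - v ⬝ᵥ A *ᵥ v ≤ z ⬝ᵥ A⁻¹ *ᵥ z := by
  set u := A⁻¹ *ᵥ z
  have hAu : A *ᵥ u = z := mulVec_nonsing_inv_mulVec hA.det_pos.ne'.isUnit z
  have hAt : Aᵀ = A := isHermitian_iff_isSymm.mp hA.isHermitian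
  have hsymm : u ⬝ᵥ A *ᵥ v = v ⬝ᵥ z := by
    rw [dotProduct_mulVec, ← mulVec_transpose, hAt, hAu, dotProduct_comm]
  have hnonneg : 0 ≤ (v - u) ⬝ᵥ A *ᵥ (v - u) := by
    simpa using hA.posSemidef.dotProduct_mulVec_nonneg (v - u)
  rw [mulVec_sub, dotProduct_sub, sub_dotProduct, sub_dotProduct, hsymm, hAu] at hnonneg
  rw [dotProduct_comm z]
  linarith

theorem PosDef.dotProduct_inv_mulVec_le_of_le {A B : Matrix n n ℝ} (hA : A.PosDef)
    (hAB : A ≤ B) (z : n → ℝ) : z ⬝ᵥ B⁻¹ *ᵥ z ≤ z ⬝ᵥ A⁻¹ *ᵥ z := by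
  have hB : B.PosDef := by simpa using hA.add_posSemidef (le_iff.mp hAB)
  set v := B⁻¹ *ᵥ z
  have hBv : B *ᵥ v = z := mulVec_nonsing_inv_mulVec hB.det_pos.ne'.isUnit z
  have hquad : v ⬝ᵥ A *ᵥ v ≤ v ⬝ᵥ B *ᵥ v := by
    have := (le_iff.mp hAB).dotProduct_mulVec_nonneg v
    rw [star_trivial, sub_mulVec, dotProduct_sub] at this
    linarith
  calc z ⬝ᵥ B⁻¹ *ᵥ z = 2 * (v ⬝ᵥ z) - v ⬝ᵥ B *ᵥ v := by rw [hBv, dotProduct_comm z]; ring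
    _ ≤ 2 * (v ⬝ᵥ z) - v ⬝ᵥ A *ᵥ v := by linarith
    _ ≤ z ⬝ᵥ A⁻¹ *ᵥ z := hA.two_mul_dotProduct_sub_le v z

theorem PosDef.two_pow_card_mul_det_le_det_add_sum_vecMulVec [LinearOrder ι]
    {A : Matrix n n ℝ} (hA : A.PosDef) (u : ι → n → ℝ) (S : Finset ι)
    (hS : ∀ t ∈ S, 1 ≤ u t ⬝ᵥ (A + ∑ s ∈ S with s < t, vecMulVec (u s) (u s))⁻¹ *ᵥ u t) :
    2 ^ #S * A.det ≤ (A + ∑ s ∈ S, vecMulVec (u s) (u s)).det := by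
  induction S using Finset.induction_on_max with
  | empty => simp
  | insert a S hlt ih =>
    have haS : a ∉ S := fun ha => lt_irrefl a (hlt a ha)
    have hfilter : ∀ t ∈ S, {s ∈ insert a S | s < t} = {s ∈ S | s < t} := fun t ht => by
      rw [filter_insert, if_neg (not_lt.mpr (hlt t ht).le)]
    have hfilter_a : {s ∈ insert a S | s < a} = S := by
      rw [filter_insert, if_neg (lt_irrefl a), filter_true_of_mem hlt]
    have hdet := ih fun t ht => by simpa [hfilter t ht] using hS t (mem_insert_of_mem ht)
    have hquad := hS a (mem_insert_self a S)
    rw [hfilter_a] at hquad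
    have hW := hA.add_sum_vecMulVec_self u S
    rw [sum_insert haS, add_comm (vecMulVec _ _), ← add_assoc,
      det_add_vecMulVec hW.det_pos.ne'.isUnit, card_insert_of_notMem haS, pow_succ]
    nlinarith [hW.det_pos]

theorem two_pow_card_mul_pow_le_of_one_le_dotProduct_inv_mulVec [LinearOrder ι] {lam : ℝ}
    (hlam : 0 < lam) {u : ι → n → ℝ} (hu : ∀ s, u s ⬝ᵥ u s ≤ 1) (S : Finset ι)
    (hS : ∀ t ∈ S,
      1 ≤ u t ⬝ᵥ (lam • 1 + ∑ s ∈ S with s < t, vecMulVec (u s) (u s))⁻¹ *ᵥ u t) :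
    2 ^ #S * lam ^ Fintype.card n ≤
      ((Fintype.card n * lam + #S) / Fintype.card n) ^ Fintype.card n := by
  have hA : (lam • 1 : Matrix n n ℝ).PosDef := PosDef.one.smul hlam
  have hW := (hA.add_sum_vecMulVec_self u S).posSemidef
  calc 2 ^ #S * lam ^ Fintype.card n = 2 ^ #S * (lam • 1 : Matrix n n ℝ).det := by simp
    _ ≤ (lam • 1 + ∑ s ∈ S, vecMulVec (u s) (u s)).det :=
        hA.two_pow_card_mul_det_le_det_add_sum_vecMulVec u S hS
    _ ≤ ((lam • 1 + ∑ s ∈ S, vecMulVec (u s) (u s)).trace / Fintype.card n) ^ Fintype.card n :=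
        hW.det_le_trace_div_card_pow
    _ ≤ ((Fintype.card n * lam + #S) / Fintype.card n) ^ Fintype.card n := by
        gcongr
        · exact div_nonneg hW.trace_nonneg (Nat.cast_nonneg _)
        · simpa [trace_add, mul_comm] using trace_sum_vecMulVec_self_le_card hu S

end Matrix

/-- elliptical potential count lemma.  For a sequence of unit-norm-bounded vectors
`x_1, …, x_T` and `V_t = λ I + Σ_{s=1}^{t-1} x_s x_sᵀ`, the number of rounds `t ∈ [T]` with
`‖x_t‖²_{V_t⁻¹} > 1` is at most `(2d/log 2) · log(1 + 1/(λ log 2))`. -/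
theorem stmt_7 (d T : ℕ) (x : ℕ → EuclideanSpace ℝ (Fin d)) (hx : ∀ t, ‖x t‖ ≤ 1)
    (lam : ℝ) (hlam : 0 < lam)
    (V : ℕ → Matrix (Fin d) (Fin d) ℝ)
    (hV : ∀ t, V t = lam • (1 : Matrix (Fin d) (Fin d) ℝ)
      + ∑ s ∈ Finset.Ico 1 t, Matrix.of (fun i j => x s i * x s j)) :
    (((Finset.Icc 1 T).filter (fun t => 1 < quadForm ((V t)⁻¹) (fun i => x t i))).card : ℝ)
      ≤ (2 * d / Real.log 2) * Real.log (1 + 1 / (lam * Real.log 2)) := by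
  set S := (Finset.Icc 1 T).filter (fun t => 1 < quadForm ((V t)⁻¹) (fun i => x t i))
  set u : ℕ → Fin d → ℝ := fun t i => x t i
  have hu : ∀ s, u s ⬝ᵥ u s ≤ 1 := fun s => by
    rw [show u s ⬝ᵥ u s = ‖x s‖ ^ 2 by
      rw [← real_inner_self_eq_norm_sq, EuclideanSpace.inner_eq_star_dotProduct]; simp [u]]
    exact pow_le_one₀ (norm_nonneg _) (hx s)
  have hS : ∀ t ∈ S,
      1 ≤ u t ⬝ᵥ (lam • 1 + ∑ s ∈ S with s < t, vecMulVec (u s) (u s))⁻¹ *ᵥ u t := by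
    intro t ht
    have hsub : {s ∈ S | s < t} ⊆ Ico 1 t := fun s hs => by
      simp only [S, mem_filter, mem_Icc, mem_Ico] at hs ⊢
      omega
    have hle : lam • 1 + ∑ s ∈ S with s < t, vecMulVec (u s) (u s) ≤ V t :=
      hV t ▸ add_le_add le_rfl (sum_vecMulVec_self_le_of_subset hsub u)
    calc 1 ≤ quadForm (V t)⁻¹ (u t) := (mem_filter.mp ht).2.le
      _ = u t ⬝ᵥ (V t)⁻¹ *ᵥ u t := quadForm_eq_dotProduct_mulVec _ _
      _ ≤ _ := ((PosDef.one.smul hlam).add_sum_vecMulVec_self u _).dotProduct_inv_mulVec_le_of_le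
          hle _
  have hdet := two_pow_card_mul_pow_le_of_one_le_dotProduct_inv_mulVec hlam hu S hS
  rw [Fintype.card_fin] at hdet
  exact Real.natCast_le_of_two_pow_mul_pow_le hlam hdet
end

section
/- Let { x_{t,k} }_{t ∈ [T], k ∈ [K]} ⊂ ℝ^d with ‖x_{t,k}‖₂ ≤ 1 for all t, k, let λ > 0, and let V_t = λ I_d + Σ_{s=1}^{t−1} Σ_{k=1}^K x_{s,k} x_{s,k}ᵀ. Then Σ_{t=1}^T min{ 1, Σ_{k=1}^K ‖x_{t,k}‖²_{V_t^{−1}} } ≤ 2 d log( 1 + K T /(d λ) ). -/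
open Matrix Finset Real

lemma Finset.one_add_sum_le_prod_one_add {ι R : Type*} [CommSemiring R] [PartialOrder R]
    [IsOrderedRing R] (s : Finset ι) {f : ι → R} (hf : ∀ i ∈ s, 0 ≤ f i) :
    1 + ∑ i ∈ s, f i ≤ ∏ i ∈ s, (1 + f i) := by
  classical
  induction s using Finset.induction with
  | empty => simp
  | insert a s ha ih =>
    have hfa : 0 ≤ f a := hf a (mem_insert_self a s)
    have hs : 0 ≤ ∑ i ∈ s, f i := sum_nonneg fun i hi => hf i (mem_insert_of_mem hi)
    calc 1 + ∑ i ∈ insert a s, f i ≤ (1 + f a) * (1 + ∑ i ∈ s, f i) := by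
          rw [sum_insert ha, show (1 + f a) * (1 + ∑ i ∈ s, f i)
            = 1 + (f a + ∑ i ∈ s, f i) + f a * ∑ i ∈ s, f i by ring]
          exact le_add_of_nonneg_right (mul_nonneg hfa hs)
      _ ≤ ∏ i ∈ insert a s, (1 + f i) := by
          rw [prod_insert ha]
          exact mul_le_mul_of_nonneg_left (ih fun i hi => hf i (mem_insert_of_mem hi))
            (add_nonneg zero_le_one hfa)

lemma Real.prod_le_sum_div_card_pow_s16 {ι : Type*} (s : Finset ι) {z : ι → ℝ}
    (hz : ∀ i ∈ s, 0 ≤ z i) : ∏ i ∈ s, z i ≤ ((∑ i ∈ s, z i) / #s) ^ #s := by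
  rcases s.eq_empty_or_nonempty with rfl | hs
  · simp
  have hcard : (0 : ℝ) < #s := by exact_mod_cast hs.card_pos
  have amgm := geom_mean_le_arith_mean s (fun _ => 1) z (fun _ _ => zero_le_one)
    (by simpa using hcard) hz
  simp only [rpow_one, sum_const, nsmul_eq_mul, mul_one, one_mul] at amgm
  calc ∏ i ∈ s, z i = ((∏ i ∈ s, z i) ^ (#s : ℝ)⁻¹) ^ #s := by
        rw [← rpow_natCast, ← rpow_mul (prod_nonneg hz), inv_mul_cancel₀ hcard.ne', rpow_one]
    _ ≤ ((∑ i ∈ s, z i) / #s) ^ #s := by gcongr; exact rpow_nonneg (prod_nonneg hz) _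

lemma Real.min_one_le_two_mul_log_one_add {u : ℝ} (hu : 0 ≤ u) : min 1 u ≤ 2 * log (1 + u) := by
  rcases le_total u 1 with h | h
  · have hlog := one_sub_inv_le_log_of_pos (by linarith : 0 < 1 + u)
    have hinv : (1 + u)⁻¹ ≤ 1 - u / 2 := by
      rw [inv_le_iff_one_le_mul₀ (by linarith)]
      nlinarith
    rw [min_eq_right h]
    linarith
  · have := log_two_gt_d9
    have : log 2 ≤ log (1 + u) := log_le_log (by norm_num) (by linarith)
    rw [min_eq_left h]
    linarith

namespace Matrix

variable {n : Type*} [Fintype n]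

lemma trace_mul_vecMulVec_self (M : Matrix n n ℝ) (v : n → ℝ) :
    (M * vecMulVec v v).trace = quadForm M v := by
  simp only [trace, diag_apply, mul_apply, vecMulVec_apply, quadForm]
  exact sum_congr rfl fun i _ => sum_congr rfl fun j _ => by ring

variable [DecidableEq n]

lemma IsHermitian.det_one_add {B : Matrix n n ℝ} (hB : B.IsHermitian) :
    (1 + B).det = ∏ i, (1 + hB.eigenvalues i) := by
  have h : 1 + B = cfc (fun x : ℝ => 1 + x) B := by
    rw [cfc_const_add _ _ B, cfc_id' ℝ B, algebraMap_eq_diagonal]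
    simp
  rw [h, hB.cfc_eq]
  simp [IsHermitian.cfc, -Unitary.conjStarAlgAut_apply]

lemma PosSemidef.one_add_trace_le_det_one_add {B : Matrix n n ℝ} (hB : B.PosSemidef) :
    1 + B.trace ≤ (1 + B).det := by
  rw [hB.isHermitian.det_one_add, hB.isHermitian.trace_eq_sum_eigenvalues]
  simpa using one_add_sum_le_prod_one_add univ fun i _ => hB.eigenvalues_nonneg i

lemma PosSemidef.det_le_trace_div_card_pow_s16 {W : Matrix n n ℝ} (hW : W.PosSemidef) :
    W.det ≤ (W.trace / Fintype.card n) ^ Fintype.card n := by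
  rw [hW.isHermitian.det_eq_prod_eigenvalues, hW.isHermitian.trace_eq_sum_eigenvalues]
  simpa using Real.prod_le_sum_div_card_pow_s16 univ fun i _ => hW.eigenvalues_nonneg i

lemma PosDef.log_det_le_of_trace_le {W : Matrix n n ℝ} {c : ℝ} (hW : W.PosDef)
    (hc : W.trace ≤ c) : log W.det ≤ Fintype.card n * log (c / Fintype.card n) := by
  rw [← log_pow]
  refine log_le_log hW.det_pos (hW.posSemidef.det_le_trace_div_card_pow_s16.trans ?_)
  gcongr
  exact div_nonneg hW.posSemidef.trace_nonneg (Nat.cast_nonneg _)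

open scoped MatrixOrder in
-- With `S = √W`, the witness is `B = S⁻¹ A S⁻¹`, since `W + A = S (1 + B) S`.
lemma PosDef.exists_det_add_eq {W A : Matrix n n ℝ} (hW : W.PosDef) (hA : A.PosSemidef) :
    ∃ B : Matrix n n ℝ, B.PosSemidef ∧ B.trace = (W⁻¹ * A).trace ∧
      (W + A).det = W.det * (1 + B).det := by
  set S := CFC.sqrt W
  have hSS : S * S = W := CFC.sqrt_mul_sqrt_self W hW.posSemidef.nonneg
  have hS : IsUnit S.det :=
    (isUnit_iff_isUnit_det S).mp ((CFC.isUnit_sqrt_iff W).mpr hW.isUnit)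
  have hSinv : (S⁻¹)ᴴ = S⁻¹ := (CFC.sqrt_nonneg W).posSemidef.isHermitian.inv
  refine ⟨S⁻¹ * A * S⁻¹, ?_, ?_, ?_⟩
  · have := hA.mul_mul_conjTranspose_same S⁻¹
    rwa [hSinv] at this
  · rw [trace_mul_cycle, ← hSS, mul_inv_rev]
  · have : W + A = S * (1 + S⁻¹ * A * S⁻¹) * S := by
      rw [mul_add, add_mul, mul_one, hSS, Matrix.mul_assoc S, nonsing_inv_mul_cancel_right _ _ hS,
        mul_nonsing_inv_cancel_left _ _ hS]
    rw [this, det_mul, det_mul, ← hSS, det_mul]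
    ring

lemma PosDef.trace_inv_mul_nonneg {W A : Matrix n n ℝ} (hW : W.PosDef) (hA : A.PosSemidef) :
    0 ≤ (W⁻¹ * A).trace := by
  obtain ⟨B, hB, htr, -⟩ := hW.exists_det_add_eq hA
  exact htr ▸ hB.trace_nonneg

lemma PosDef.det_mul_one_add_trace_le_det_add {W A : Matrix n n ℝ} (hW : W.PosDef)
    (hA : A.PosSemidef) : W.det * (1 + (W⁻¹ * A).trace) ≤ (W + A).det := by
  obtain ⟨B, hB, htr, hdet⟩ := hW.exists_det_add_eq hA
  rw [hdet, ← htr]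
  exact mul_le_mul_of_nonneg_left hB.one_add_trace_le_det_one_add hW.det_pos.le

theorem sum_min_one_trace_le_two_mul_log_det {V A : ℕ → Matrix n n ℝ} {T : ℕ}
    (hV : ∀ t ∈ Icc 1 T, (V t).PosDef) (hA : ∀ t ∈ Icc 1 T, (A t).PosSemidef)
    (hVA : ∀ t ∈ Icc 1 T, V (t + 1) = V t + A t) :
    ∑ t ∈ Icc 1 T, min 1 ((V t)⁻¹ * A t).trace
      ≤ 2 * (log (V (T + 1)).det - log (V 1).det) := by
  have hstep (t : ℕ) (ht : t ∈ Icc 1 T) :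
      min 1 ((V t)⁻¹ * A t).trace ≤ 2 * (log (V (t + 1)).det - log (V t).det) := by
    have hu := (hV t ht).trace_inv_mul_nonneg (hA t ht)
    have hdet := (hV t ht).det_pos
    refine (min_one_le_two_mul_log_one_add hu).trans ?_
    gcongr 2 * ?_
    rw [le_sub_iff_add_le', ← log_mul hdet.ne' (by positivity), hVA t ht]
    gcongr
    exact (hV t ht).det_mul_one_add_trace_le_det_add (hA t ht)
  calc _ ≤ ∑ t ∈ Icc 1 T, 2 * (log (V (t + 1)).det - log (V t).det) := sum_le_sum hstep
    _ = _ := by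
      rw [← mul_sum, ← Ico_add_one_right_eq_Icc, sum_Ico_sub (fun t => log (V t).det) (by omega)]

end Matrix

lemma EuclideanSpace.trace_vecMulVec_self {n : Type*} [Fintype n] (v : EuclideanSpace ℝ n) :
    (vecMulVec v.ofLp v.ofLp).trace = ‖v‖ ^ 2 := by
  rw [EuclideanSpace.real_norm_sq_eq]
  simp [dotProduct, sq]

/-- generalized elliptical potential lemma.  For a doubly-indexed family of
unit-norm-bounded vectors `x_{t,k}` and `V_t = λ I + Σ_{s=1}^{t-1} Σ_{k=1}^K x_{s,k} x_{s,k}ᵀ`,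
`Σ_{t=1}^T min{1, Σ_k ‖x_{t,k}‖²_{V_t⁻¹}} ≤ 2 d log(1 + K T/(d λ))`. -/
theorem stmt_16 (d T K : ℕ) (x : ℕ → Fin K → EuclideanSpace ℝ (Fin d))
    (hx : ∀ t k, ‖x t k‖ ≤ 1)
    (lam : ℝ) (hlam : 0 < lam)
    (V : ℕ → Matrix (Fin d) (Fin d) ℝ)
    (hV : ∀ t, V t = lam • (1 : Matrix (Fin d) (Fin d) ℝ)
      + ∑ s ∈ Finset.Ico 1 t, ∑ k : Fin K, Matrix.of (fun i j => x s k i * x s k j)) :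
    ∑ t ∈ Finset.Icc 1 T,
        min 1 (∑ k : Fin K, quadForm ((V t)⁻¹) (fun i => x t k i))
      ≤ 2 * d * Real.log (1 + K * T / (d * lam)) := by
  set A : ℕ → Matrix (Fin d) (Fin d) ℝ := fun s => ∑ k, vecMulVec (x s k).ofLp (x s k).ofLp
  have hVA (t : ℕ) : V t = lam • 1 + ∑ s ∈ Ico 1 t, A s := hV t
  have hA (s : ℕ) : (A s).PosSemidef :=
    posSemidef_sum _ fun k _ => by simpa using posSemidef_vecMulVec_self_star (x s k).ofLp
  have hVpos (t : ℕ) : (V t).PosDef :=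
    hVA t ▸ (PosDef.one.smul hlam).add_posSemidef (posSemidef_sum _ fun s _ => hA s)
  have hVsucc (t : ℕ) (ht : t ∈ Icc 1 T) : V (t + 1) = V t + A t := by
    rw [hVA, hVA, sum_Ico_succ_top (mem_Icc.1 ht).1, add_assoc]
  have htrA (s : ℕ) : (A s).trace ≤ K := by
    simp only [A, trace_sum, EuclideanSpace.trace_vecMulVec_self]
    simpa using sum_le_sum fun k (_ : k ∈ univ) => pow_le_one₀ (norm_nonneg _) (hx s k)
  have htrV : (V (T + 1)).trace ≤ d * lam + K * T := by
    rw [hVA, trace_add, trace_smul, trace_one, trace_sum, Fintype.card_fin, smul_eq_mul, mul_comm]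
    gcongr
    simpa [mul_comm] using sum_le_sum fun s (_ : s ∈ Ico 1 (T + 1)) => htrA s
  have hdetV1 : log (V 1).det = d * log lam := by simp [hVA, log_pow]
  calc _ = ∑ t ∈ Icc 1 T, min 1 ((V t)⁻¹ * A t).trace := by
        simp [A, Matrix.mul_sum, trace_sum, trace_mul_vecMulVec_self]
    _ ≤ 2 * (log (V (T + 1)).det - log (V 1).det) :=
        sum_min_one_trace_le_two_mul_log_det (fun t _ => hVpos t) (fun t _ => hA t) hVsucc
    _ ≤ 2 * (d * log ((d * lam + K * T) / d) - d * log lam) := by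
        rw [hdetV1]
        gcongr
        simpa using (hVpos (T + 1)).log_det_le_of_trace_le htrV
    _ = 2 * d * log (1 + K * T / (d * lam)) := by
        rcases Nat.eq_zero_or_pos d with rfl | hd
        · simp
        rw [show (d * lam + K * T) / d = lam * (1 + K * T / (d * lam)) by field_simp,
          log_mul hlam.ne' (by positivity)]
        ring
end
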